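/- arXiv:1712.10150 — 2 statements merged into one kernel-verified Lean document; each statement's English description precedes it below -/
import Mathlib

section
/- Let λ be the complex-valued 1-form on ℙ¹(ℂ) ∖ {0, 1, ∞} given in the Thom–Whitney Deligne complex by λ = -(1/2)[(ε+1) ⊗ dt/t + (ε-1) ⊗ dt̄/t̄ + dε ⊗ log(t t̄)], where t is the absolute coordinate. Then λ satisfies λ|_{t=1} = 0 and dλ = 0, and moreover λ|_{ε=0} = -(1/2)(dt/t - dt̄/t̄) is purely imaginary (lies in (2πi)·E¹_{ℝ}) while λ|_{ε=1} = -dt/t lies in the Hodge filtration step F¹. -/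
open Complex

/-! The Thom–Whitney element
`λ = -(1/2)[(ε+1) ⊗ dt/t + (ε-1) ⊗ dt̄/t̄ + dε ⊗ log(t t̄)]`
on `ℙ¹(ℂ) ∖ {0, 1, ∞}` is encoded by its coefficient functions:
`lamA ε` is the coefficient of `dt`, `lamB ε` the coefficient of `dt̄`, and
`lamC` the coefficient of `dε`. -/

/-- Coefficient of `dt` in `λ`: `-(1/2)(ε+1)/t`. -/
noncomputable def lamA (ε : ℝ) (z : ℂ) : ℂ := -(1 / 2 : ℂ) * ((ε : ℂ) + 1) / z

/-- Coefficient of `dt̄` in `λ`: `-(1/2)(ε-1)/t̄`. -/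
noncomputable def lamB (ε : ℝ) (z : ℂ) : ℂ :=
  -(1 / 2 : ℂ) * ((ε : ℂ) - 1) / (starRingEnd ℂ z)

/-- Coefficient of `dε` in `λ`: `-(1/2) log(t t̄)`. -/
noncomputable def lamC (z : ℂ) : ℂ := -(1 / 2 : ℂ) * (Real.log (Complex.normSq z) : ℂ)

/-- The total differential in the base direction of the `dε`-component of `λ`,
`h ↦ -(1/2)(h/t + h̄/t̄)`, matching the `ε`-derivatives of the `dt` and `dt̄`
components; its equality with the derivative of `lamC` expresses `dλ = 0`. -/
noncomputable def lamCDeriv (z : ℂ) : ℂ →L[ℝ] ℂ :=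
  (-(1 / 2 : ℂ) / z) • (ContinuousLinearMap.id ℝ ℂ) +
    (-(1 / 2 : ℂ) / (starRingEnd ℂ z)) • (Complex.conjCLE.toContinuousLinearMap)

/-- The form `λ = -(1/2)[(ε+1) ⊗ dt/t + (ε-1) ⊗ dt̄/t̄ + dε ⊗ log(t t̄)]` satisfies:
(1) `λ|_{t=1} = 0` (the `dε`-component vanishes at `t = 1`, the form components restrict
trivially to a point);
(2) at `ε = 0` it is purely imaginary, i.e. lies in `(2πi)·E¹_ℝ`: the conjugate of the
`dt̄`-coefficient is minus the `dt`-coefficient;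
(3) at `ε = 1` it lies in `F¹`: the `dt̄`-coefficient vanishes, `λ|_{ε=1} = -dt/t`;
(4) `dλ = 0`: the `dt`-coefficient is holomorphic, the `dt̄`-coefficient is
antiholomorphic, and the base differential of the `dε`-coefficient equals the
`ε`-derivative of the form part. -/
theorem lambda_properties :
    (lamC 1 = 0) ∧
    (∀ z : ℂ, z ≠ 0 → starRingEnd ℂ (lamB 0 z) = -(lamA 0 z)) ∧
    (∀ z : ℂ, lamB 1 z = 0 ∧ lamA 1 z = -1 / z) ∧
    (∀ (ε : ℝ) (z : ℂ), z ≠ 0 → DifferentiableAt ℂ (lamA ε) z) ∧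
    (∀ (ε : ℝ) (z : ℂ), z ≠ 0 →
      DifferentiableAt ℂ (fun w => starRingEnd ℂ (lamB ε w)) z) ∧
    (∀ z : ℂ, z ≠ 0 → HasFDerivAt lamC (lamCDeriv z) z) := by
  refine ⟨by simp [lamC], ?_, ?_, ?_, ?_, ?_⟩
  · intro z hz
    simp [lamA, lamB, map_div₀, map_ofNat]
    ring
  · intro z
    constructor
    · simp [lamB]
    · rw [lamA]; push_cast; ring
  · intro ε z hz
    exact (differentiableAt_const _).div differentiableAt_id hz
  · intro ε z hz
    have he : (fun w => starRingEnd ℂ (lamB ε w)) =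
        fun w => (-(1/2:ℂ) * ((ε:ℂ) - 1)) / w := by
      funext w
      simp [lamB, map_div₀, map_ofNat]
    rw [he]
    exact (differentiableAt_const _).div differentiableAt_id hz
  · intro z hz
    have hns : Complex.normSq z ≠ 0 := by simpa using hz
    have h1 : HasFDerivAt (fun w : ℂ => w.re * w.re) ((2*z.re) • Complex.reCLM) z := by
      have := (Complex.reCLM.hasFDerivAt (x := z)).mul (Complex.reCLM.hasFDerivAt (x := z))
      refine this.congr_fderiv ?_
      ext h; simp; ring
    have h2 : HasFDerivAt (fun w : ℂ => w.im * w.im) ((2*z.im) • Complex.imCLM) z := by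
      have := (Complex.imCLM.hasFDerivAt (x := z)).mul (Complex.imCLM.hasFDerivAt (x := z))
      refine this.congr_fderiv ?_
      ext h; simp; ring
    have hn : HasFDerivAt (fun w : ℂ => Complex.normSq w)
        ((2*z.re) • Complex.reCLM + (2*z.im) • Complex.imCLM) z := by
      have := h1.add h2
      simp only [Complex.normSq_apply]
      exact this
    have hlog : HasFDerivAt (fun w : ℂ => Real.log (Complex.normSq w))
        ((Complex.normSq z)⁻¹ • ((2*z.re) • Complex.reCLM + (2*z.im) • Complex.imCLM)) z :=
      (Real.hasDerivAt_log hns).comp_hasFDerivAt z hn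
    have hc : HasFDerivAt lamC
        ((-(1/2:ℂ)) • (Complex.ofRealCLM.comp
          ((Complex.normSq z)⁻¹ • ((2*z.re) • Complex.reCLM + (2*z.im) • Complex.imCLM)))) z :=
      ((Complex.ofRealCLM.hasFDerivAt).comp z hlog).const_smul (-(1/2:ℂ))
    convert hc using 1
    ext h
    simp only [lamCDeriv, ContinuousLinearMap.add_apply, ContinuousLinearMap.coe_smul',
      Pi.smul_apply, ContinuousLinearMap.id_apply, ContinuousLinearEquiv.coe_coe,
      Complex.conjCLE_apply, ContinuousLinearMap.coe_comp', Function.comp_apply,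
      Complex.ofRealCLM_apply, Complex.reCLM_apply, Complex.imCLM_apply, smul_eq_mul,
      Complex.real_smul]
    rw [div_mul_eq_mul_div, div_mul_eq_mul_div, div_add_div _ _ hz (by simpa using hz)]
    rw [Complex.mul_conj]
    rw [div_eq_iff (by exact_mod_cast hns)]
    push_cast
    have hne : z.re*z.re + z.im*z.im ≠ 0 := by
      simpa [Complex.normSq_apply] using hns
    have hne2 : z.im^2 + z.re^2 ≠ 0 := by rw [sq, sq, add_comm]; exact hne
    simp [Complex.ext_iff, Complex.normSq_apply]
    constructor <;> (field_simp; ring)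
    field_simp
    ring
end

section
/- In ℚ(i), the identities 1 - (-1-i)⁶ = (2+i)(2+3i) and 1 - (2+3i) = i(-1-i)(1-2i) hold. Consequently, in ℚ(i)^× ⊗_ℤ ℚ(i)^×, the element 12·((2+3i) ⊗ (1-2i)) can be written as -12·((-1-i) ⊗ (1-(-1-i))) + 2·((-1-i)⁶ ⊗ (1-(-1-i)⁶)) + 12·((2+3i) ⊗ (1-(2+3i))) plus a sum of symmetric terms of the form u ⊗ v + v ⊗ u. -/
/-- The element `u ⊗ v` of `F^× ⊗_ℤ F^×`. -/
noncomputable def unitsTmul {F : Type*} [Field F] (u v : Fˣ) :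
    TensorProduct ℤ (Additive Fˣ) (Additive Fˣ) :=
  TensorProduct.tmul ℤ (Additive.ofMul u) (Additive.ofMul v)

/-- The subgroup of symmetric elements of `F^× ⊗_ℤ F^×`, generated by the
`u ⊗ v + v ⊗ u`. -/
noncomputable def symSub (F : Type*) [Field F] :
    AddSubgroup (TensorProduct ℤ (Additive Fˣ) (Additive Fˣ)) :=
  AddSubgroup.closure {x | ∃ u v : Fˣ, x = unitsTmul u v + unitsTmul v u}

lemma unitsTmul_mul_left {F : Type*} [Field F] (u v w : Fˣ) :
    unitsTmul (u * v) w = unitsTmul u w + unitsTmul v w := by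
  simp [unitsTmul, TensorProduct.add_tmul]

lemma unitsTmul_mul_right {F : Type*} [Field F] (u v w : Fˣ) :
    unitsTmul u (v * w) = unitsTmul u v + unitsTmul u w := by
  simp [unitsTmul, TensorProduct.tmul_add]

lemma unitsTmul_one_right {F : Type*} [Field F] (u : Fˣ) :
    unitsTmul u 1 = 0 := by
  simp [unitsTmul]

lemma unitsTmul_pow_left {F : Type*} [Field F] (u w : Fˣ) (n : ℕ) :
    unitsTmul (u ^ n) w = n • unitsTmul u w := by
  induction n with
  | zero => simp [unitsTmul]
  | succ k ih => rw [pow_succ, unitsTmul_mul_left, ih, succ_nsmul]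

lemma unitsTmul_pow_right {F : Type*} [Field F] (u w : Fˣ) (n : ℕ) :
    unitsTmul u (w ^ n) = n • unitsTmul u w := by
  induction n with
  | zero => simp [unitsTmul]
  | succ k ih => rw [pow_succ, unitsTmul_mul_right, ih, succ_nsmul]

/-- In `ℚ(i)` (any field of characteristic zero with an element `i` with `i² = −1`):
the identities `1 − (−1−i)⁶ = (2+i)(2+3i)` and `1 − (2+3i) = i(−1−i)(1−2i)` hold.
Consequently, in `ℚ(i)^× ⊗_ℤ ℚ(i)^×`,
`12·((2+3i) ⊗ (1−2i))` equals
`−12·((−1−i) ⊗ (1−(−1−i))) + 2·((−1−i)⁶ ⊗ (1−(−1−i)⁶)) + 12·((2+3i) ⊗ (1−(2+3i)))`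
plus a sum of symmetric terms `u ⊗ v + v ⊗ u`. -/
theorem gaussian_tensor_decomposition {F : Type*} [Field F] [CharZero F]
    (i : F) (hi : i ^ 2 = -1)
    (h1 : (2 + 3 * i : F) ≠ 0) (h2 : (1 - 2 * i : F) ≠ 0) (h3 : (-1 - i : F) ≠ 0)
    (h4 : (1 - (-1 - i) : F) ≠ 0) (h5 : (1 - (-1 - i) ^ 6 : F) ≠ 0)
    (h6 : (1 - (2 + 3 * i) : F) ≠ 0) :
    (1 - (-1 - i) ^ 6 = (2 + i) * (2 + 3 * i)) ∧
    (1 - (2 + 3 * i) = i * (-1 - i) * (1 - 2 * i)) ∧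
    (∃ s ∈ symSub F,
      (12 : ℤ) • unitsTmul (Units.mk0 _ h1) (Units.mk0 _ h2) =
        -((12 : ℤ) • unitsTmul (Units.mk0 _ h3) (Units.mk0 _ h4)) +
          (2 : ℤ) • unitsTmul (Units.mk0 ((-1 - i) ^ 6) (pow_ne_zero 6 h3)) (Units.mk0 _ h5) +
          (12 : ℤ) • unitsTmul (Units.mk0 _ h1) (Units.mk0 _ h6) + s) := by
  have eq1 : (1 - (-1 - i) ^ 6 : F) = (2 + i) * (2 + 3 * i) := by
    linear_combination (-i^4 - 6*i^3 - 14*i^2 - 14*i - 4) * hi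
  have eq2 : (1 - (2 + 3 * i) : F) = i * (-1 - i) * (1 - 2 * i) := by
    linear_combination (-1 - 2*i) * hi
  refine ⟨eq1, eq2, ?_⟩
  have hi0 : i ≠ 0 := by intro h; rw [h] at hi; norm_num at hi
  have h2i : (2 + i : F) ≠ 0 := by
    intro h; apply h4; linear_combination h
  set U1 : Fˣ := Units.mk0 _ h1
  set U2 : Fˣ := Units.mk0 _ h2
  set A : Fˣ := Units.mk0 _ h3
  set P : Fˣ := Units.mk0 _ h2i
  set I : Fˣ := Units.mk0 _ hi0
  have e4 : Units.mk0 _ h4 = P := Units.ext (by simp only [Units.val_mk0, P]; ring)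
  have e5 : Units.mk0 _ h5 = P * U1 := Units.ext (by push_cast; exact eq1)
  have e6 : Units.mk0 _ h6 = I * A * U2 := Units.ext (by push_cast; exact eq2)
  have eA6 : Units.mk0 ((-1 - i) ^ 6) (pow_ne_zero 6 h3) = A ^ 6 := Units.ext (by
    rw [Units.val_pow_eq_pow_val, Units.val_mk0, Units.val_mk0])
  have eI4 : I ^ 4 = 1 := Units.ext (by
    rw [Units.val_pow_eq_pow_val, Units.val_mk0, Units.val_one]
    linear_combination (i ^ 2 - 1) * hi)
  refine ⟨-((12 : ℤ) • (unitsTmul A U1 + unitsTmul U1 A)), ?_, ?_⟩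
  case _ =>
    apply AddSubgroup.neg_mem
    apply AddSubgroup.zsmul_mem
    apply AddSubgroup.subset_closure
    exact ⟨A, U1, rfl⟩
  · have h12 : (12 : ℤ) • unitsTmul U1 I = 0 := by
      have h4n : (4 : ℕ) • unitsTmul U1 I = 0 := by
        rw [← unitsTmul_pow_right, eI4, unitsTmul_one_right]
      rw [show (12 : ℤ) = 3 * ((4 : ℕ) : ℤ) by norm_num, mul_smul, natCast_zsmul, h4n,
        smul_zero]
    rw [e4, e5, e6, eA6]
    simp only [unitsTmul_pow_left, unitsTmul_mul_left, unitsTmul_mul_right]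
    have c6 : ∀ x : TensorProduct ℤ (Additive Fˣ) (Additive Fˣ),
        (2 : ℤ) • (6 : ℕ) • x = (12 : ℤ) • x := by
      intro x
      rw [← natCast_zsmul x 6, smul_smul]; norm_num
    simp only [smul_add]
    rw [c6, c6, h12]
    abel
end
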